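/- Let x_1,…,x_m be real numbers and let A ∈ ℝ^{(ℓ+1)m×(ℓ+1)m} be the block lower-bidiagonal matrix with X = diag(x_1,…,x_m) in each of the ℓ+1 diagonal blocks and i·I in subdiagonal block position (i+1,i) for i = 1,…,ℓ. Let v = (e; 0; …; 0) ∈ ℝ^{(ℓ+1)m} with e the all-ones vector. Then for every k ≥ 0, every block index 0 ≤ i ≤ ℓ, and every 1 ≤ j ≤ m, the entry of A^k·v in block i at position j equals k(k−1)⋯(k−i+1)·x_j^{k−i} (the i-th falling factorial of k times x_j^{k−i}) when i ≤ k, and equals 0 when i > k. -/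

import Mathlib

/-! The `i`-th block of `A ^ k *ᵥ v` at position `j` is `(X ^ k)⁽ⁱ⁾` evaluated at `x j`: on vectors of
iterated derivatives of a polynomial `p` evaluated at the `x j`, the matrix `A` acts as multiplication
of `p` by `X`, by the Leibniz rule `(p * X)⁽ⁱ⁾ = p⁽ⁱ⁾ * X + i • p⁽ⁱ⁻¹⁾`, and `v` comes from `p = 1`.
Then `(X ^ k)⁽ⁱ⁾ = k.descFactorial i • X ^ (k - i)`, and the descending factorial vanishes for `i > k`. -/

open Matrix

/-- The block lower-bidiagonal matrix with `X = diag (x 1, …, x m)` in each of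
the `ℓ + 1` diagonal blocks and `i • I` in subdiagonal block position
`(i+1, i)` for `i = 1, …, ℓ`. -/
def blockA (m ℓ : ℕ) (x : Fin m → ℝ) :
    Matrix (Fin (ℓ + 1) × Fin m) (Fin (ℓ + 1) × Fin m) ℝ :=
  Matrix.of fun p q =>
    if p.1 = q.1 ∧ p.2 = q.2 then x p.2
    else if (p.1 : ℕ) = (q.1 : ℕ) + 1 ∧ p.2 = q.2 then ((p.1 : ℕ) : ℝ)
    else 0

/-- The vector `v = (e; 0; …; 0)` with `e` the all-ones vector of length `m`. -/
def eZeroVec (m ℓ : ℕ) : Fin (ℓ + 1) × Fin m → ℝ := fun p => if p.1 = 0 then 1 else 0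

open Polynomial

lemma sum_ite_eq_val_add_one_mul {R : Type*} [Semiring R] {n i : ℕ} (hi : i ≤ n) (g : ℕ → R) :
    ∑ i' : Fin n, (if i = i' + 1 then (i : R) * g i' else 0) = i * g (i - 1) := by
  obtain _ | i := i
  · simp
  · rw [Finset.sum_eq_single_of_mem ⟨i, hi⟩ (Finset.mem_univ _)]
    · simp
    · intro i' _ hi'
      exact if_neg fun h => hi' (Fin.ext (by simp only at h ⊢; omega))

section

variable (m ℓ : ℕ) (x : Fin m → ℝ)

lemma blockA_apply (i i' : Fin (ℓ + 1)) (j j' : Fin m) :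
    blockA m ℓ x (i, j) (i', j') =
      if j = j' then (if i = i' then x j else if (i : ℕ) = i' + 1 then (i : ℝ) else 0) else 0 := by
  by_cases hj : j = j' <;> simp [blockA, hj]

lemma blockA_mulVec_apply (f : ℕ → Fin m → ℝ) (i : Fin (ℓ + 1)) (j : Fin m) :
    (blockA m ℓ x *ᵥ fun q => f q.1 q.2) (i, j) = x j * f i j + i * f (i - 1) j := by
  simp only [mulVec, dotProduct, Fintype.sum_prod_type, blockA_apply, ite_mul, zero_mul,
    Finset.sum_ite_eq, Finset.mem_univ, if_true]
  have hsplit : ∀ i' : Fin (ℓ + 1),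
      (if i = i' then x j * f i' j else if (i : ℕ) = i' + 1 then (i : ℝ) * f i' j else 0) =
        (if i = i' then x j * f i' j else 0) +
          if (i : ℕ) = i' + 1 then (i : ℝ) * f i' j else 0 := by
    intro i'
    by_cases h : i = i'
    · subst h; simp
    · simp only [h, if_false, zero_add]
  rw [Finset.sum_congr rfl fun i' _ => hsplit i', Finset.sum_add_distrib, Finset.sum_ite_eq,
    if_pos (Finset.mem_univ _), sum_ite_eq_val_add_one_mul i.is_lt.le (f · j)]

lemma blockA_mulVec_eval_iterate_derivative (p : ℝ[X]) :
    (blockA m ℓ x *ᵥ fun q => (derivative^[q.1] p).eval (x q.2)) =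
      fun q => (derivative^[q.1] (p * X)).eval (x q.2) := by
  ext ⟨i, j⟩
  rw [blockA_mulVec_apply m ℓ x (fun n j => (derivative^[n] p).eval (x j)),
    iterate_derivative_mul_X]
  simp only [eval_add, eval_mul, eval_X, nsmul_eq_mul, eval_natCast]
  ring

lemma eZeroVec_eq_eval_iterate_derivative_one :
    eZeroVec m ℓ = fun q => (derivative^[q.1] (1 : ℝ[X])).eval (x q.2) := by
  ext ⟨i, j⟩
  rcases Nat.eq_zero_or_pos i with hi | hi
  · simp [eZeroVec, hi, Fin.ext_iff]
  · simp [eZeroVec, iterate_derivative_one hi, Fin.ext_iff, hi.ne']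

lemma blockA_pow_mulVec_eZeroVec (k : ℕ) :
    blockA m ℓ x ^ k *ᵥ eZeroVec m ℓ =
      fun q => (derivative^[q.1] (X ^ k : ℝ[X])).eval (x q.2) := by
  induction k with
  | zero => simpa using eZeroVec_eq_eval_iterate_derivative_one m ℓ x
  | succ k ih =>
    rw [pow_succ', ← mulVec_mulVec, ih, blockA_mulVec_eval_iterate_derivative, pow_succ]

end

/-- The entry of `A ^ k • v` in block `i` at position `j` equals the `i`-th
falling factorial of `k` times `x j ^ (k - i)` when `i ≤ k`, and `0` when
`i > k`. -/
theorem pow_mulVec_eZeroVec_apply (m ℓ : ℕ) (x : Fin m → ℝ) (k : ℕ)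
    (i : Fin (ℓ + 1)) (j : Fin m) :
    ((blockA m ℓ x ^ k) *ᵥ eZeroVec m ℓ) (i, j) =
      if (i : ℕ) ≤ k then (k.descFactorial (i : ℕ) : ℝ) * x j ^ (k - (i : ℕ))
      else 0 := by
  simp only [blockA_pow_mulVec_eZeroVec, iterate_derivative_X_pow_eq_smul, eval_smul, eval_pow,
    eval_X, smul_eq_mul]
  split_ifs with hik
  · rfl
  · simp [Nat.descFactorial_eq_zero_iff_lt.mpr (not_le.mp hik)]
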